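/- For the dynamic program S_k(l) = min_{i ∈ Q_k(l)} d_i(l) + S_{k-1}(l-2) with S_0(l) = 0 for l ≤ 0, if each set Q_k(l) is nonempty for the relevant arguments, then S_K(l) equals the minimum over all choices of one disk per cell of the total movement cost, where disk i assigned to cell k moves to the point (l - 2(K-k) - 1, 0). -/

import Mathlib

/-! Unrolling the recursion writes `S K l` as the sum, over the `K` cells, of the cheapest
admissible disk for each cell. Every assignment costs at least that much cell by cell, and
choosing a cheapest disk for every cell is an admissible assignment: the candidate sets of
distinct cells are disjoint, so the choices are automatically distinct. -/

noncomputable def pt (x y : ℝ) : EuclideanSpace ℝ (Fin 2) := WithLp.toLp 2 ![x, y]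

open Function

theorem eq_sum_fin_of_rec {M : Type*} [AddCommMonoid M] {F : ℝ → M} {S : ℕ → ℝ → M}
    (c : ℝ) (h0 : ∀ t, S 0 t = 0) (hrec : ∀ k t, S (k + 1) t = F t + S k (t - c))
    (K : ℕ) (l : ℝ) : S K l = ∑ k : Fin K, F (l - c * ((K : ℝ) - 1 - k)) := by
  induction K generalizing l with
  | zero => simp [h0]
  | succ K ih =>
    rw [hrec, ih, Fin.sum_univ_castSucc, add_comm]
    congr 1
    · refine Finset.sum_congr rfl fun k _ => congrArg F ?_
      simp only [Fin.val_castSucc, Nat.cast_succ]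
      ring
    · simp

theorem injective_of_mem_of_pairwise_disjoint {ι α : Type*} {A : ι → Set α} {σ : ι → α}
    (hA : Pairwise (Disjoint on A)) (hσ : ∀ k, σ k ∈ A k) : Injective σ := by
  intro k k' h
  by_contra hne
  exact Set.disjoint_left.mp (hA hne) (hσ k) (h ▸ hσ k')

theorem isLeast_assignment_cost {ι α : Type*} [Fintype ι] [Finite α]
    (A : ι → Set α) (f : ι → α → ℝ) (hne : ∀ k, (A k).Nonempty)
    (hA : Pairwise (Disjoint on A)) :
    IsLeast {c : ℝ | ∃ σ : ι → α, Injective σ ∧ (∀ k, σ k ∈ A k) ∧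
      c = ∑ k, f k (σ k)} (∑ k, sInf (f k '' A k)) := by
  have hfin : ∀ k, (f k '' A k).Finite := fun k => (Set.toFinite _).image _
  have hmin : ∀ k, ∃ i ∈ A k, f k i = sInf (f k '' A k) := fun k =>
    ((hne k).image (f k)).csInf_mem (hfin k)
  choose σ hσA hσf using hmin
  refine ⟨⟨σ, injective_of_mem_of_pairwise_disjoint hA hσA, hσA, ?_⟩, ?_⟩
  · exact Finset.sum_congr rfl fun k _ => (hσf k).symm
  · rintro c ⟨τ, -, hτA, rfl⟩
    exact Finset.sum_le_sum fun k _ => csInf_le (hfin k).bddBelow ⟨τ k, hτA k, rfl⟩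

theorem dynamic_program_correct_general (n K : ℕ) (l : ℝ)
    (d : Fin n → ℝ → ℝ)
    (Q : ℝ → Set (Fin n))
    (S : ℕ → ℝ → ℝ)
    (hS0 : ∀ t, S 0 t = 0)
    (hSrec : ∀ k t, S (k + 1) t = sInf ((fun i => d i t) '' Q t) + S k (t - 2))
    (hnonempty : ∀ k : ℕ, k < K → (Q (l - 2 * ((K : ℝ) - 1 - k))).Nonempty)
    (hdisjoint : ∀ k k' : ℕ, k < K → k' < K → k ≠ k' →
      Disjoint (Q (l - 2 * ((K : ℝ) - 1 - k))) (Q (l - 2 * ((K : ℝ) - 1 - k')))) :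
    S K l = sInf {c : ℝ | ∃ σ : Fin K → Fin n, Function.Injective σ ∧
      (∀ k : Fin K, σ k ∈ Q (l - 2 * ((K : ℝ) - 1 - (k : ℕ)))) ∧
      c = ∑ k : Fin K, d (σ k) (l - 2 * ((K : ℝ) - 1 - (k : ℕ)))} := by
  rw [eq_sum_fin_of_rec 2 hS0 hSrec K l]
  refine (IsLeast.csInf_eq ?_).symm
  exact isLeast_assignment_cost (fun k : Fin K => Q (l - 2 * ((K : ℝ) - 1 - (k : ℕ))))
    (fun k i => d i (l - 2 * ((K : ℝ) - 1 - (k : ℕ)))) (fun k => hnonempty k k.isLt)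
    fun k k' hkk' => hdisjoint k k' k.isLt k'.isLt (Fin.val_injective.ne hkk')

/-- Correctness of the dynamic program: with `Q(l)` the set of disks within distance `ε`
of `(l-1,0)`, `d i l = ‖p_i − (l-1,0)‖`, and the recursion
`S (k+1) l = min_{i ∈ Q l} d i l + S k (l-2)`, `S 0 l = 0`, if the sets `Q` at the
relevant arguments are nonempty and pairwise disjoint over distinct cells, then `S K l`
equals the minimum total movement over injective assignments of one disk per cell, where
the disk assigned to cell `k` (0-indexed) moves to `(l - 2(K-1-k) - 1, 0)`. -/
theorem dynamic_program_correct (n K : ℕ) (l ε : ℝ)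
    (p : Fin n → EuclideanSpace ℝ (Fin 2))
    (d : Fin n → ℝ → ℝ) (hd : ∀ i t, d i t = dist (p i) (pt (t - 1) 0))
    (Q : ℝ → Set (Fin n)) (hQ : ∀ t, Q t = {i | d i t ≤ ε})
    (S : ℕ → ℝ → ℝ)
    (hS0 : ∀ t, S 0 t = 0)
    (hSrec : ∀ k t, S (k + 1) t = sInf ((fun i => d i t) '' Q t) + S k (t - 2))
    (hnonempty : ∀ k : ℕ, k < K → (Q (l - 2 * ((K : ℝ) - 1 - k))).Nonempty)
    (hdisjoint : ∀ k k' : ℕ, k < K → k' < K → k ≠ k' →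
      Disjoint (Q (l - 2 * ((K : ℝ) - 1 - k))) (Q (l - 2 * ((K : ℝ) - 1 - k')))) :
    S K l = sInf {c : ℝ | ∃ σ : Fin K → Fin n, Function.Injective σ ∧
      (∀ k : Fin K, σ k ∈ Q (l - 2 * ((K : ℝ) - 1 - (k : ℕ)))) ∧
      c = ∑ k : Fin K, d (σ k) (l - 2 * ((K : ℝ) - 1 - (k : ℕ)))} :=
  dynamic_program_correct_general n K l d Q S hS0 hSrec hnonempty hdisjoint
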